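/- arXiv:1505.02748 — 4 statements merged into one kernel-verified Lean document; each statement's English description precedes it below -/
import Mathlib

section
/- Let x ∈ A^ℕ (A a finite alphabet) be a sequence that is not eventually periodic, and fix M, N₀ ∈ ℕ. Suppose for some N ≥ N₀ there exist M ≤ m₁ < m₂ ≤ N with w_x(N, m₁) = w_x(N, m₂), where w_x(N, m) denotes the word of length N in x starting at position m. Then there exists K ≥ m₂ such that: (1) for all K ≤ k₁ < k₂ ≤ K + N − N₀, w_x(N, k₁) ≠ w_x(N, k₂); and (2) for all K ≤ k < K + N − N₀ there exists M ≤ l ≤ N with w_x(N₀, k) = w_x(N₀, l). -/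
/-- A one-sided sequence is eventually periodic if some nonzero translate agrees with it
from some point on. -/
def EventuallyPeriodicNat {A : Type*} (x : ℕ → A) : Prop :=
  ∃ m : ℕ, m ≠ 0 ∧ ∃ N : ℕ, ∀ n ≥ N, x (m + n) = x n

namespace EKMAux

/-- `x` has period `q` on the interval `[a, b)`. -/
def PerOn {A : Type*} (x : ℕ → A) (q a b : ℕ) : Prop :=
  ∀ i, a ≤ i → i + q < b → x i = x (i + q)

theorem perOn_mono {A : Type*} {x : ℕ → A} {q a b a' b' : ℕ}
    (h : PerOn x q a b) (ha : a ≤ a') (hb : b' ≤ b) : PerOn x q a' b' :=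
  fun i hi hib => h i (ha.trans hi) (hib.trans_le hb)

theorem perOn_congr {A : Type*} {x : ℕ → A} {q a b : ℕ} (hq : 1 ≤ q)
    (h : PerOn x q a b) :
    ∀ i j, a ≤ i → a ≤ j → i < b → j < b → i % q = j % q → x i = x j := by
  have key : ∀ n i j, a ≤ i → j < b → i ≤ j → j - i = n → q ∣ n → x i = x j := by
    intro n
    induction n using Nat.strong_induction_on with
    | _ n ih =>
      intro i j hi hj hij hn hdvd
      rcases Nat.eq_zero_or_pos n with h0 | h0
      · have : i = j := by omega
        rw [this]
      · have hqn : q ≤ n := Nat.le_of_dvd h0 hdvd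
        have h1 : x i = x (i + q) := h i hi (by omega)
        have h2 : x (i + q) = x j :=
          ih (n - q) (by omega) (i + q) j (by omega) hj (by omega) (by omega)
            (Nat.dvd_sub hdvd dvd_rfl)
        exact h1.trans h2
  intro i j hi hj hib hjb hmod
  rcases le_total i j with hle | hle
  · exact key (j - i) i j hi hjb hle rfl ((Nat.modEq_iff_dvd' hle).mp hmod)
  · exact (key (i - j) j i hj hib hle rfl ((Nat.modEq_iff_dvd' hle).mp hmod.symm)).symm

/-- Fine–Wilf theorem on an interval: if `x` has periods `p` and `q` on `[a, b)` and
`b - a ≥ p + q - gcd p q`, then `x` has period `gcd p q` on `[a, b)`. -/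
theorem fineWilf {A : Type*} {x : ℕ → A} :
    ∀ s p q a b, p + q ≤ s → 1 ≤ p → 1 ≤ q →
    PerOn x p a b → PerOn x q a b → a + p + q ≤ b + Nat.gcd p q →
    PerOn x (Nat.gcd p q) a b := by
  intro s
  induction s with
  | zero => intro p q a b hs hp1 hq1 _ _ _; omega
  | succ s ih =>
    intro p q a b hs hp1 hq1 hp hq hlen
    have hgdp : Nat.gcd p q ∣ p := Nat.gcd_dvd_left p q
    have hgdq : Nat.gcd p q ∣ q := Nat.gcd_dvd_right p q
    have hg1 : 1 ≤ Nat.gcd p q := Nat.pos_of_ne_zero fun h0 => by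
      have := Nat.eq_zero_of_gcd_eq_zero_left h0
      omega
    have hglep : Nat.gcd p q ≤ p := Nat.le_of_dvd (by omega) hgdp
    have hgleq : Nat.gcd p q ≤ q := Nat.le_of_dvd (by omega) hgdq
    rcases lt_trichotomy p q with hlt | heqpq | hgt
    · -- p < q : subtract p from q
      have hgpq : Nat.gcd p q ∣ q - p := Nat.dvd_sub hgdq hgdp
      have hgle : Nat.gcd p q + p ≤ q := by
        have := Nat.le_of_dvd (by omega) hgpq
        omega
      have hstep : PerOn x (q - p) a (b - p) := by
        intro i hi hib
        have h1 : x i = x (i + q) := hq i hi (by omega)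
        have h2 : x (i + (q - p)) = x (i + (q - p) + p) := hp _ (by omega) (by omega)
        rw [show i + (q - p) + p = i + q from by omega] at h2
        exact h1.trans h2.symm
      have hp' : PerOn x p a (b - p) := perOn_mono hp le_rfl (by omega)
      have hgcd' : Nat.gcd p (q - p) = Nat.gcd p q := Nat.gcd_sub_self_right (le_of_lt hlt)
      have ihg : PerOn x (Nat.gcd p q) a (b - p) := by
        have := ih p (q - p) a (b - p) (by omega) hp1 (by omega) hp' hstep
          (by rw [hgcd']; omega)
        rwa [hgcd'] at this
      have hmodgen : ∀ m : ℕ, (m + p) % Nat.gcd p q = m % Nat.gcd p q := by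
        intro m
        obtain ⟨c, hc'⟩ := hgdp
        rw [show (m + p) % Nat.gcd p q = (m + Nat.gcd p q * c) % Nat.gcd p q from by
          rw [← hc']]
        exact Nat.add_mul_mod_self_left _ _ _
      intro n hn hnb
      by_cases hc : n + Nat.gcd p q < b - p
      · exact ihg n hn hc
      · have hng : a + p ≤ n + Nat.gcd p q := by omega
        have e1 : x (n + Nat.gcd p q - p) = x (n + Nat.gcd p q) := by
          have := hp (n + Nat.gcd p q - p) (by omega) (by omega)
          rwa [show n + Nat.gcd p q - p + p = n + Nat.gcd p q from by omega] at this
        by_cases hn2 : n < b - p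
        · have hmod : n % Nat.gcd p q = (n + Nat.gcd p q - p) % Nat.gcd p q := by
            calc n % Nat.gcd p q = (n + Nat.gcd p q) % Nat.gcd p q :=
                (Nat.add_mod_right n _).symm
              _ = ((n + Nat.gcd p q - p) + p) % Nat.gcd p q := by
                  rw [show n + Nat.gcd p q - p + p = n + Nat.gcd p q from by omega]
              _ = (n + Nat.gcd p q - p) % Nat.gcd p q := hmodgen _
          have hcg := perOn_congr (by omega) ihg n (n + Nat.gcd p q - p) hn (by omega)
            (by omega) (by omega) hmod
          exact hcg.trans e1
        · have e0 : x (n - p) = x n := by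
            have := hp (n - p) (by omega) (by omega)
            rwa [show n - p + p = n from by omega] at this
          have hmod2 : (n - p) % Nat.gcd p q = (n + Nat.gcd p q - p) % Nat.gcd p q := by
            rw [show n + Nat.gcd p q - p = (n - p) + Nat.gcd p q from by omega]
            exact (Nat.add_mod_right _ _).symm
          have hcg := perOn_congr (by omega) ihg (n - p) (n + Nat.gcd p q - p) (by omega)
            (by omega) (by omega) (by omega) hmod2
          exact e0.symm.trans (hcg.trans e1)
    · -- p = q
      subst heqpq
      rw [Nat.gcd_self]
      exact hp
    · -- q < p : subtract q from p
      have hgpq : Nat.gcd p q ∣ p - q := Nat.dvd_sub hgdp hgdq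
      have hgle : Nat.gcd p q + q ≤ p := by
        have := Nat.le_of_dvd (by omega) hgpq
        omega
      have hstep : PerOn x (p - q) a (b - q) := by
        intro i hi hib
        have h1 : x i = x (i + p) := hp i hi (by omega)
        have h2 : x (i + (p - q)) = x (i + (p - q) + q) := hq _ (by omega) (by omega)
        rw [show i + (p - q) + q = i + p from by omega] at h2
        exact h1.trans h2.symm
      have hq' : PerOn x q a (b - q) := perOn_mono hq le_rfl (by omega)
      have hgcd' : Nat.gcd (p - q) q = Nat.gcd p q := Nat.gcd_sub_self_left (le_of_lt hgt)
      have ihg : PerOn x (Nat.gcd p q) a (b - q) := by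
        have := ih (p - q) q a (b - q) (by omega) (by omega) hq1 hstep hq'
          (by rw [hgcd']; omega)
        rwa [hgcd'] at this
      have hmodgen : ∀ m : ℕ, (m + q) % Nat.gcd p q = m % Nat.gcd p q := by
        intro m
        obtain ⟨c, hc'⟩ := hgdq
        rw [show (m + q) % Nat.gcd p q = (m + Nat.gcd p q * c) % Nat.gcd p q from by
          rw [← hc']]
        exact Nat.add_mul_mod_self_left _ _ _
      intro n hn hnb
      by_cases hc : n + Nat.gcd p q < b - q
      · exact ihg n hn hc
      · have hng : a + q ≤ n + Nat.gcd p q := by omega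
        have e1 : x (n + Nat.gcd p q - q) = x (n + Nat.gcd p q) := by
          have := hq (n + Nat.gcd p q - q) (by omega) (by omega)
          rwa [show n + Nat.gcd p q - q + q = n + Nat.gcd p q from by omega] at this
        by_cases hn2 : n < b - q
        · have hmod : n % Nat.gcd p q = (n + Nat.gcd p q - q) % Nat.gcd p q := by
            calc n % Nat.gcd p q = (n + Nat.gcd p q) % Nat.gcd p q :=
                (Nat.add_mod_right n _).symm
              _ = ((n + Nat.gcd p q - q) + q) % Nat.gcd p q := by
                  rw [show n + Nat.gcd p q - q + q = n + Nat.gcd p q from by omega]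
              _ = (n + Nat.gcd p q - q) % Nat.gcd p q := hmodgen _
          have hcg := perOn_congr (by omega) ihg n (n + Nat.gcd p q - q) hn (by omega)
            (by omega) (by omega) hmod
          exact hcg.trans e1
        · have e0 : x (n - q) = x n := by
            have := hq (n - q) (by omega) (by omega)
            rwa [show n - q + q = n from by omega] at this
          have hmod2 : (n - q) % Nat.gcd p q = (n + Nat.gcd p q - q) % Nat.gcd p q := by
            rw [show n + Nat.gcd p q - q = (n - q) + Nat.gcd p q from by omega]
            exact (Nat.add_mod_right _ _).symm
          have hcg := perOn_congr (by omega) ihg (n - q) (n + Nat.gcd p q - q) (by omega)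
            (by omega) (by omega) (by omega) hmod2
          exact e0.symm.trans (hcg.trans e1)

/-- If `x` is `p`-periodic on `[α, β)`, and on a full window `[w, w+p) ⊆ [α, β)` positions
congruent mod `g` (with `g ∣ p`) have equal values, then `x` is `g`-periodic on `[α, β)`. -/
theorem perOn_of_window {A : Type*} {x : ℕ → A} {p g α β w : ℕ}
    (hg1 : 1 ≤ g) (hp1 : 1 ≤ p) (hgp : g ∣ p)
    (hper : PerOn x p α β) (hw1 : α ≤ w) (hw2 : w + p ≤ β)
    (hcong : ∀ i j, w ≤ i → w ≤ j → i < w + p → j < w + p → i % g = j % g → x i = x j) :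
    PerOn x g α β := by
  have hrep : ∀ m, ∃ m', w ≤ m' ∧ m' < w + p ∧ m' % p = m % p := by
    intro m
    have hwp : w % p < p := Nat.mod_lt _ (by omega)
    have hmp : m % p < p := Nat.mod_lt _ (by omega)
    refine ⟨w + (p + m % p - w % p) % p, Nat.le_add_right _ _, by
      have := Nat.mod_lt (p + m % p - w % p) (show 0 < p by omega); omega, ?_⟩
    have hX : w + (p + m % p - w % p) = m % p + p * (w / p + 1) := by
      have hdm := Nat.div_add_mod w p
      obtain ⟨PW, hPW⟩ : ∃ z, p * (w / p) = z := ⟨_, rfl⟩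
      have hmul : p * (w / p + 1) = PW + p := by rw [Nat.mul_add, hPW, Nat.mul_one]
      rw [hPW] at hdm
      omega
    calc (w + (p + m % p - w % p) % p) % p
        = (w % p + ((p + m % p - w % p) % p) % p) % p := by rw [Nat.add_mod]
      _ = (w % p + (p + m % p - w % p) % p) % p := by
          rw [Nat.mod_mod_of_dvd _ dvd_rfl]
      _ = (w + (p + m % p - w % p)) % p := by rw [← Nat.add_mod]
      _ = (m % p + p * (w / p + 1)) % p := by rw [hX]
      _ = (m % p) % p := Nat.add_mul_mod_self_left _ _ _
      _ = m % p := Nat.mod_mod_of_dvd _ dvd_rfl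
  intro n hn hnb
  obtain ⟨i', hi'1, hi'2, hi'3⟩ := hrep n
  obtain ⟨j', hj'1, hj'2, hj'3⟩ := hrep (n + g)
  have hgle : g ≤ p := Nat.le_of_dvd (by omega) hgp
  have hxn : x n = x i' :=
    perOn_congr hp1 hper n i' hn (by omega) (by omega) (by omega) hi'3.symm
  have hxng : x (n + g) = x j' :=
    perOn_congr hp1 hper (n + g) j' (by omega) (by omega) (by omega) (by omega) hj'3.symm
  have hij : i' % g = j' % g := by
    have h1 : i' % g = n % g := by
      rw [← Nat.mod_mod_of_dvd i' hgp, ← Nat.mod_mod_of_dvd n hgp, hi'3]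
    have h2 : j' % g = (n + g) % g := by
      rw [← Nat.mod_mod_of_dvd j' hgp, ← Nat.mod_mod_of_dvd (n + g) hgp, hj'3]
    rw [h1, h2, Nat.add_mod_right]
  have hfin := hcong i' j' hi'1 hj'1 hi'2 hj'2 hij
  rw [← hxn, ← hxng] at hfin
  exact hfin

/-- Key lemma: if `x` is not eventually periodic and `1 ≤ d ≤ N`, then it cannot be that
every position `K ≥ s₀` admits a pair `a, a + q` with `a ≥ K`, `a + q ≤ K + d`, whose
length-`N` windows coincide. -/
theorem lemL {A : Type*} (x : ℕ → A) (hx : ¬ EventuallyPeriodicNat x)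
    (N d s₀ : ℕ) (hd1 : 1 ≤ d) (hdN : d ≤ N)
    (H : ∀ K, s₀ ≤ K → ∃ a q, K ≤ a ∧ 1 ≤ q ∧ a + q ≤ K + d ∧
      PerOn x q a (a + N + q)) : False := by
  classical
  -- defects exist for every period
  have hdef : ∀ q, 1 ≤ q → ∀ α, ∃ n, α ≤ n ∧ x n ≠ x (n + q) := by
    intro q hq α
    by_contra hcon
    push_neg at hcon
    exact hx ⟨q, by omega, α, fun n hn => by rw [Nat.add_comm]; exact (hcon n hn).symm⟩
  have hdef' : ∀ q α, ∃ n, α ≤ n ∧ (1 ≤ q → x n ≠ x (n + q)) := by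
    intro q α
    by_cases h : 1 ≤ q
    · obtain ⟨n, h1, h2⟩ := hdef q h α
      exact ⟨n, h1, fun _ => h2⟩
    · exact ⟨α, le_rfl, fun hq => absurd hq h⟩
  choose D hD1 hD2 using hdef'
  -- Good intervals
  set Good : ℕ → ℕ → Prop := fun α β =>
    ∃ q, 1 ≤ q ∧ q ≤ d ∧ α + N + q ≤ β ∧ PerOn x q α β with hGoodDef
  have hbound : ∀ a α' β', Good α' β' → α' ≤ a →
      β' ≤ (Finset.Icc 1 d).sup (fun q => D q a + q) := by
    intro a α' β' hgood hle
    obtain ⟨q', h1, h2, h3, h4⟩ := hgood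
    have hmem : q' ∈ Finset.Icc 1 d := Finset.mem_Icc.mpr ⟨h1, h2⟩
    have hsup : D q' a + q' ≤ (Finset.Icc 1 d).sup (fun q => D q a + q) :=
      Finset.le_sup (f := fun q => D q a + q) hmem
    by_contra hcon
    push_neg at hcon
    have hd1' : a ≤ D q' a := hD1 q' a
    exact hD2 q' a h1 (h4 (D q' a) (by omega) (by omega))
  -- maximal run containing a good interval
  have runex : ∀ a b₀, Good a b₀ → ∃ α β, Good α β ∧ α ≤ a ∧ b₀ ≤ β ∧
      (∀ α' β', Good α' β' → α' ≤ α → β ≤ β' → α' = α ∧ β' = β) := by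
    intro a b₀ hg
    set B := (Finset.Icc 1 d).sup (fun q => D q a + q) with hB
    set P : ℕ → Prop := fun m => ∃ α β, (Good α β ∧ α ≤ a ∧ b₀ ≤ β) ∧ β - α = m with hP
    have hPinit : P (b₀ - a) := ⟨a, b₀, ⟨hg, le_rfl, le_rfl⟩, rfl⟩
    have hinit_le : b₀ - a ≤ B := by
      have := hbound a a b₀ hg le_rfl
      omega
    have hspec := Nat.findGreatest_spec (P := P) hinit_le hPinit
    obtain ⟨αs, βs, ⟨hgoods, hαa, hβb⟩, hlen⟩ := hspec
    refine ⟨αs, βs, hgoods, hαa, hβb, ?_⟩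
    intro α' β' hgood' hα' hβ'
    have hb' : β' ≤ B := hbound a α' β' hgood' (by omega)
    have hle2 := Nat.le_findGreatest (P := P) (show β' - α' ≤ B by omega)
      ⟨α', β', ⟨hgood', by omega, by omega⟩, rfl⟩
    obtain ⟨qs, hqs1, _, hqslen, _⟩ := hgoods
    omega
  -- serving: every K ≥ s₀ is served by a maximal run with minimal period p
  have serve : ∀ K, s₀ ≤ K → ∃ α β p, 1 ≤ p ∧ p ≤ d ∧ PerOn x p α β ∧
      (∀ q', 1 ≤ q' → PerOn x q' α β → p ≤ q') ∧
      (∀ α' β', Good α' β' → α' ≤ α → β ≤ β' → α' = α ∧ β' = β) ∧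
      α + N + p ≤ β ∧ α + p ≤ K + d ∧ K + N + p ≤ β := by
    intro K hK
    obtain ⟨a, q, haK, hq1, haq, hstretch⟩ := H K hK
    have hqd : q ≤ d := by omega
    have hgood0 : Good a (a + N + q) := ⟨q, hq1, hqd, le_rfl, hstretch⟩
    obtain ⟨α, β, hgood, hαa, hβb, hmax⟩ := runex a (a + N + q) hgood0
    obtain ⟨qw, hqw1, hqwd, hqwlen, hqwper⟩ := hgood
    have hEx : ∃ p', 1 ≤ p' ∧ PerOn x p' α β := ⟨qw, hqw1, hqwper⟩
    set p := Nat.find hEx with hpdef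
    have hp1 : 1 ≤ p := by rw [hpdef]; exact (Nat.find_spec hEx).1
    have hpper : PerOn x p α β := by rw [hpdef]; exact (Nat.find_spec hEx).2
    have hmin : ∀ q', 1 ≤ q' → PerOn x q' α β → p ≤ q' := fun q' h1 h2 => by
      rw [hpdef]; exact Nat.find_min' hEx ⟨h1, h2⟩
    have hpqw : p ≤ qw := hmin qw hqw1 hqwper
    have hpd : p ≤ d := hpqw.trans hqwd
    -- p divides q
    have hdvd : p ∣ q := by
      have hfw : PerOn x (Nat.gcd p q) a (a + N + q) :=
        fineWilf (p + q) p q a (a + N + q) le_rfl hp1 hq1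
          (perOn_mono hpper hαa hβb) hstretch (by omega)
      by_contra hnd
      have hgdvdp : Nat.gcd p q ∣ p := Nat.gcd_dvd_left p q
      have hg1 : 1 ≤ Nat.gcd p q := Nat.pos_of_ne_zero fun h0 => by
        have := Nat.eq_zero_of_gcd_eq_zero_left h0
        omega
      have hglt : Nat.gcd p q < p := by
        rcases Nat.lt_or_ge (Nat.gcd p q) p with h | h
        · exact h
        · have heq : Nat.gcd p q = p :=
            le_antisymm (Nat.le_of_dvd (by omega) hgdvdp) h
          exact absurd (heq ▸ Nat.gcd_dvd_right p q) hnd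
      have hperg : PerOn x (Nat.gcd p q) α β :=
        perOn_of_window hg1 hp1 hgdvdp hpper hαa (by omega)
          (fun i j hi hj hip hjp hmod =>
            perOn_congr hg1 hfw i j hi hj (by omega) (by omega) hmod)
      have := hmin (Nat.gcd p q) hg1 hperg
      omega
    have hpq : p ≤ q := Nat.le_of_dvd (by omega) hdvd
    exact ⟨α, β, p, hp1, hpd, hpper, hmin, hmax, by omega, by omega, by omega⟩
  -- final contradiction: two overlapping maximal runs
  obtain ⟨α₁, β₁, p₁, h1p₁, hpd₁, hper₁, hmin₁, hmax₁, hlen₁, hKd₁, hKb₁⟩ := serve s₀ le_rfl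
  set K' := β₁ - (N + p₁) + 1 with hK'def
  have hK'eq : K' + N + p₁ = β₁ + 1 := by omega
  have hK's₀ : s₀ ≤ K' := by omega
  obtain ⟨α₂, β₂, p₂, h1p₂, hpd₂, hper₂, hmin₂, hmax₂, hlen₂, hKd₂, hKb₂⟩ := serve K' hK's₀
  have hGood₁ : Good α₁ β₁ := ⟨p₁, h1p₁, hpd₁, hlen₁, hper₁⟩
  have hGood₂ : Good α₂ β₂ := ⟨p₂, h1p₂, hpd₂, hlen₂, hper₂⟩
  rcases le_or_gt β₂ β₁ with hb | hb <;> rcases le_or_gt α₁ α₂ with ha | ha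
  · -- β₂ ≤ β₁, α₁ ≤ α₂ : R₂ ⊆ R₁, so runs are equal, contradiction with serving
    obtain ⟨hA, hB⟩ := hmax₂ α₁ β₁ hGood₁ ha hb
    subst hA; subst hB
    have h1 := hmin₁ p₂ h1p₂ hper₂
    omega
  · -- β₂ ≤ β₁, α₂ < α₁ : overlap [α₁, β₂)
    have hov1 : PerOn x p₁ α₁ β₂ := perOn_mono hper₁ le_rfl hb
    have hov2 : PerOn x p₂ α₁ β₂ := perOn_mono hper₂ (le_of_lt ha) le_rfl
    have hg1 : 1 ≤ Nat.gcd p₁ p₂ := Nat.pos_of_ne_zero fun h0 => by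
      have := Nat.eq_zero_of_gcd_eq_zero_left h0; omega
    have hgp₁ : Nat.gcd p₁ p₂ ∣ p₁ := Nat.gcd_dvd_left _ _
    have hgp₂ : Nat.gcd p₁ p₂ ∣ p₂ := Nat.gcd_dvd_right _ _
    have hgle₁ : Nat.gcd p₁ p₂ ≤ p₁ := Nat.le_of_dvd (by omega) hgp₁
    have hgle₂ : Nat.gcd p₁ p₂ ≤ p₂ := Nat.le_of_dvd (by omega) hgp₂
    have hlenov : α₁ + p₁ + p₂ + 1 ≤ β₂ := by omega
    have hfw : PerOn x (Nat.gcd p₁ p₂) α₁ β₂ :=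
      fineWilf (p₁ + p₂) p₁ p₂ α₁ β₂ le_rfl h1p₁ h1p₂ hov1 hov2 (by omega)
    have hgeq₁ : Nat.gcd p₁ p₂ = p₁ := by
      by_contra hne
      have hglt : Nat.gcd p₁ p₂ < p₁ := lt_of_le_of_ne hgle₁ hne
      have := hmin₁ (Nat.gcd p₁ p₂) hg1 (perOn_of_window hg1 h1p₁ hgp₁ hper₁ le_rfl
        (by omega) (fun i j hi hj hip hjp hmod =>
          perOn_congr hg1 hfw i j hi hj (by omega) (by omega) hmod))
      omega
    have hgeq₂ : Nat.gcd p₁ p₂ = p₂ := by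
      by_contra hne
      have hglt : Nat.gcd p₁ p₂ < p₂ := lt_of_le_of_ne hgle₂ hne
      have := hmin₂ (Nat.gcd p₁ p₂) hg1 (perOn_of_window hg1 h1p₂ hgp₂ hper₂
        (le_of_lt ha) (by omega) (fun i j hi hj hip hjp hmod =>
          perOn_congr hg1 hfw i j hi hj (by omega) (by omega) hmod))
      omega
    have hun : PerOn x (Nat.gcd p₁ p₂) α₂ β₁ := by
      intro i hi hib
      by_cases h : i + Nat.gcd p₁ p₂ < β₂
      · have h2 := hper₂ i hi (by omega)
        rw [← hgeq₂] at h2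
        exact h2
      · have h2 := hper₁ i (by omega) (by omega)
        rw [← hgeq₁] at h2
        exact h2
    have hGoodU : Good α₂ β₁ := ⟨Nat.gcd p₁ p₂, hg1, by omega, by omega, hun⟩
    have := hmax₁ α₂ β₁ hGoodU (le_of_lt ha) le_rfl
    omega
  · -- β₁ < β₂, α₁ ≤ α₂ : overlap [α₂, β₁)
    have hov1 : PerOn x p₁ α₂ β₁ := perOn_mono hper₁ ha le_rfl
    have hov2 : PerOn x p₂ α₂ β₁ := perOn_mono hper₂ le_rfl (le_of_lt hb)
    have hg1 : 1 ≤ Nat.gcd p₁ p₂ := Nat.pos_of_ne_zero fun h0 => by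
      have := Nat.eq_zero_of_gcd_eq_zero_left h0; omega
    have hgp₁ : Nat.gcd p₁ p₂ ∣ p₁ := Nat.gcd_dvd_left _ _
    have hgp₂ : Nat.gcd p₁ p₂ ∣ p₂ := Nat.gcd_dvd_right _ _
    have hgle₁ : Nat.gcd p₁ p₂ ≤ p₁ := Nat.le_of_dvd (by omega) hgp₁
    have hgle₂ : Nat.gcd p₁ p₂ ≤ p₂ := Nat.le_of_dvd (by omega) hgp₂
    have hlenov : α₂ + p₁ + p₂ ≤ β₁ + Nat.gcd p₁ p₂ := by omega
    have hfw : PerOn x (Nat.gcd p₁ p₂) α₂ β₁ :=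
      fineWilf (p₁ + p₂) p₁ p₂ α₂ β₁ le_rfl h1p₁ h1p₂ hov1 hov2 (by omega)
    have hgeq₁ : Nat.gcd p₁ p₂ = p₁ := by
      by_contra hne
      have hglt : Nat.gcd p₁ p₂ < p₁ := lt_of_le_of_ne hgle₁ hne
      have := hmin₁ (Nat.gcd p₁ p₂) hg1 (perOn_of_window hg1 h1p₁ hgp₁ hper₁ ha
        (by omega) (fun i j hi hj hip hjp hmod =>
          perOn_congr hg1 hfw i j hi hj (by omega) (by omega) hmod))
      omega
    have hgeq₂ : Nat.gcd p₁ p₂ = p₂ := by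
      by_contra hne
      have hglt : Nat.gcd p₁ p₂ < p₂ := lt_of_le_of_ne hgle₂ hne
      have := hmin₂ (Nat.gcd p₁ p₂) hg1 (perOn_of_window hg1 h1p₂ hgp₂ hper₂ le_rfl
        (by omega) (fun i j hi hj hip hjp hmod =>
          perOn_congr hg1 hfw i j hi hj (by omega) (by omega) hmod))
      omega
    have hun : PerOn x (Nat.gcd p₁ p₂) α₁ β₂ := by
      intro i hi hib
      by_cases h : i + Nat.gcd p₁ p₂ < β₁
      · have h2 := hper₁ i hi (by omega)
        rw [← hgeq₁] at h2
        exact h2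
      · have h2 := hper₂ i (by omega) (by omega)
        rw [← hgeq₂] at h2
        exact h2
    have hGoodU : Good α₁ β₂ := ⟨Nat.gcd p₁ p₂, hg1, by omega, by omega, hun⟩
    have := hmax₁ α₁ β₂ hGoodU le_rfl (le_of_lt hb)
    omega
  · -- β₁ < β₂, α₂ < α₁ : R₁ ⊆ R₂ properly, contradiction with maximality of R₁
    obtain ⟨hA, hB⟩ := hmax₁ α₂ β₂ hGood₂ (le_of_lt ha) (le_of_lt hb)
    omega

end EKMAux

/-- Epifanio–Koskas–Mignosi: if two length-`N` windows of a non-eventually-periodic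
sequence coincide, then there is a position `K ≥ m₂` after which all length-`N` windows
indexed in `[K, K + N - N₀]` are pairwise distinct, while each length-`N₀` prefix of such
a window already occurs at some position in `[M, N]`. -/
theorem ekm_distinct_words
    {A : Type*} [Fintype A] (x : ℕ → A) (hx : ¬ EventuallyPeriodicNat x)
    (M N₀ N : ℕ) (hN₀ : N₀ ≤ N) (m₁ m₂ : ℕ)
    (hm₁ : M ≤ m₁) (hm : m₁ < m₂) (hm₂ : m₂ ≤ N)
    (heq : ∀ t < N, x (m₁ + t) = x (m₂ + t)) :
    ∃ K : ℕ, m₂ ≤ K ∧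
      (∀ k₁ k₂ : ℕ, K ≤ k₁ → k₁ < k₂ → k₂ ≤ K + N - N₀ →
        ∃ t < N, x (k₁ + t) ≠ x (k₂ + t)) ∧
      (∀ k : ℕ, K ≤ k → k < K + N - N₀ →
        ∃ l : ℕ, M ≤ l ∧ l ≤ N ∧ ∀ t < N₀, x (k + t) = x (l + t)) := by
  classical
  set d := N - N₀ with hd
  rcases Nat.eq_zero_or_pos d with hd0 | hd1
  · -- trivial case N₀ = N
    refine ⟨m₂, le_rfl, ?_, ?_⟩
    · intro k₁ k₂ h1 h2 h3
      exact absurd h3 (by omega)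
    · intro k h1 h2
      exact absurd h2 (by omega)
  · -- main case
    have hexK : ∃ K, m₂ ≤ K ∧ ∀ k₁ k₂ : ℕ, K ≤ k₁ → k₁ < k₂ → k₂ ≤ K + d →
        ¬ (∀ t, t < N → x (k₁ + t) = x (k₂ + t)) := by
      by_contra hcon
      push_neg at hcon
      refine EKMAux.lemL x hx N d m₂ hd1 (by omega) ?_
      intro K hK
      obtain ⟨k₁, k₂, h1, h2, h3, h4⟩ := hcon K hK
      refine ⟨k₁, k₂ - k₁, h1, by omega, by omega, ?_⟩
      intro i hi hib
      have h5 := h4 (i - k₁) (by omega)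
      rw [show k₁ + (i - k₁) = i from by omega,
        show k₂ + (i - k₁) = i + (k₂ - k₁) from by omega] at h5
      exact h5
    have hKspec := Nat.find_spec hexK
    set K := Nat.find hexK with hKdef
    obtain ⟨hKm₂, hKdist⟩ := hKspec
    refine ⟨K, hKm₂, ?_, ?_⟩
    · intro k₁ k₂ h1 h2 h3
      have hne := hKdist k₁ k₂ h1 h2 (by omega)
      by_contra hno
      push_neg at hno
      exact hne hno
    · -- part 2 via descent
      have main : ∀ s, m₁ ≤ s → s < K + d →
          ∃ l : ℕ, M ≤ l ∧ l ≤ N ∧ ∀ t < N₀, x (s + t) = x (l + t) := by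
        intro s
        induction s using Nat.strong_induction_on with
        | _ s ih =>
          intro hs1 hs2
          rcases lt_or_ge s m₂ with hcase1 | hcase1
          · exact ⟨s, by omega, by omega, fun t ht => rfl⟩
          · rcases lt_or_ge s (m₂ + d) with hcase2 | hcase2
            · -- use the initial pair
              obtain ⟨l, hl1, hl2, hl3⟩ := ih (s - (m₂ - m₁)) (by omega) (by omega) (by omega)
              refine ⟨l, hl1, hl2, fun t ht => ?_⟩
              have h := heq (s + t - m₂) (by omega)
              rw [show m₁ + (s + t - m₂) = s - (m₂ - m₁) + t from by omega,
                show m₂ + (s + t - m₂) = s + t from by omega] at h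
              exact h.symm.trans (hl3 t ht)
            · -- use a failing K' < K
              have hnot := Nat.find_min hexK (m := s - d) (by rw [← hKdef]; omega)
              push_neg at hnot
              obtain ⟨k₁, k₂, h1, h2, h3, h4⟩ := hnot (by omega)
              obtain ⟨l, hl1, hl2, hl3⟩ := ih (s - (k₂ - k₁)) (by omega) (by omega) (by omega)
              refine ⟨l, hl1, hl2, fun t ht => ?_⟩
              have h := h4 (s + t - k₂) (by omega)
              rw [show k₁ + (s + t - k₂) = s - (k₂ - k₁) + t from by omega,
                show k₂ + (s + t - k₂) = s + t from by omega] at h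
              exact h.symm.trans (hl3 t ht)
      intro k h1 h2
      exact main k (by omega) (by omega)
end

section
/- The natural symbolic coding of a minimal k-interval exchange transformation has word complexity P(n) ≤ (k−1)n + 1 for all n ≥ 1. -/
open MeasureTheory Filter

/-- `T` is a `k`-interval exchange transformation of `[0, lam)` with separation points
`sep 0 = 0 < sep 1 < … < sep k = lam`: it is a bijection of `[0, lam)` which is a
translation on each subinterval `[sep i, sep (i+1))`. -/
structure IsIET (k : ℕ) (lam : ℝ) (sep : Fin (k + 1) → ℝ) (T : ℝ → ℝ) : Prop where
  sep_zero : sep 0 = 0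
  sep_last : sep (Fin.last k) = lam
  sep_mono : StrictMono sep
  bijOn : Set.BijOn T (Set.Ico 0 lam) (Set.Ico 0 lam)
  translation : ∀ i : Fin k, ∃ c : ℝ,
    ∀ x ∈ Set.Ico (sep i.castSucc) (sep i.succ), T x = x + c

/-- Minimality of an IET: every forward orbit is dense in `[0, lam)`. -/
def IETMinimal (lam : ℝ) (T : ℝ → ℝ) : Prop :=
  ∀ x ∈ Set.Ico (0 : ℝ) lam,
    Set.Ico (0 : ℝ) lam ⊆ closure {y | ∃ n : ℕ, T^[n] x = y}

/-- The word complexity of the natural symbolic coding of the IET: the number of words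
`w` of length `n` over `{0, …, k-1}` that occur as the coding of the first `n` iterates
of some point. -/
noncomputable def ietComplexity (k : ℕ) (lam : ℝ) (sep : Fin (k + 1) → ℝ)
    (T : ℝ → ℝ) (n : ℕ) : ℕ :=
  Nat.card {w : Fin n → Fin k // ∃ x ∈ Set.Ico (0 : ℝ) lam,
    ∀ t : Fin n, T^[(t : ℕ)] x ∈ Set.Ico (sep (w t).castSucc) (sep (w t).succ)}

/-!
Write `I i = [sep i, sep (i + 1))`. The cylinder of a word `w` of length `n + 1` is
`I (w 0) ∩ T⁻¹ (cylinder of the tail of w)`, and `T` is a translation on `I (w 0)`, so by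
induction every cylinder is a half-open interval `[a, b)`; if it is nonempty, then `a = 0` or
`T^[j] a = sep i` for some `j < n` and some interior separation point, `0 < i < k`. As `T^[j]` is
injective on `[0, lam)`, there are at most `1 + n (k - 1)` such points, and distinct nonempty
cylinders are disjoint, hence have distinct left endpoints.
-/

open Set Function

variable {k n : ℕ} {lam : ℝ} {sep : Fin (k + 1) → ℝ} {T : ℝ → ℝ}

theorem eq_of_mem_Ico_sep {α : Type*} [LinearOrder α] {sep : Fin (k + 1) → α}
    (hsep : StrictMono sep) {z : α} {i j : Fin k}
    (hi : z ∈ Ico (sep i.castSucc) (sep i.succ)) (hj : z ∈ Ico (sep j.castSucc) (sep j.succ)) :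
    i = j :=
  le_antisymm (Fin.castSucc_lt_succ_iff.1 (hsep.lt_iff_lt.1 (hi.1.trans_lt hj.2)))
    (Fin.castSucc_lt_succ_iff.1 (hsep.lt_iff_lt.1 (hj.1.trans_lt hi.2)))

variable (lam sep T) in
def ietCylinder (w : Fin n → Fin k) : Set ℝ :=
  {x | x ∈ Ico 0 lam ∧
    ∀ t : Fin n, T^[(t : ℕ)] x ∈ Ico (sep (w t).castSucc) (sep (w t).succ)}

theorem eq_of_mem_ietCylinder (hsep : StrictMono sep) {x : ℝ} {w w' : Fin n → Fin k}
    (hw : x ∈ ietCylinder lam sep T w) (hw' : x ∈ ietCylinder lam sep T w') : w = w' :=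
  funext fun t => eq_of_mem_Ico_sep hsep (hw.2 t) (hw'.2 t)

def interiorSep (sep : Fin (k + 1) → ℝ) (i : Fin (k - 1)) : ℝ :=
  sep ⟨i + 1, by omega⟩

variable (lam sep T) in
noncomputable def cutPoint : Option (Fin n × Fin (k - 1)) → ℝ
  | none => 0
  | some (j, i) => invFunOn T^[(j : ℕ)] (Ico 0 lam) (interiorSep sep i)

namespace IsIET

theorem Ico_sep_subset (hT : IsIET k lam sep T) (i : Fin k) :
    Ico (sep i.castSucc) (sep i.succ) ⊆ Ico 0 lam :=
  Ico_subset_Ico (hT.sep_zero ▸ hT.sep_mono.monotone (Fin.zero_le _))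
    (hT.sep_last ▸ hT.sep_mono.monotone (Fin.le_last _))

theorem ietCylinder_succ (hT : IsIET k lam sep T) (w : Fin (n + 1) → Fin k) {c : ℝ}
    (hc : ∀ x ∈ Ico (sep (w 0).castSucc) (sep (w 0).succ), T x = x + c) :
    ietCylinder lam sep T w =
      Ico (sep (w 0).castSucc) (sep (w 0).succ) ∩
        (· + c) ⁻¹' ietCylinder lam sep T (Fin.tail w) := by
  ext x
  simp only [ietCylinder, mem_ofPred_eq, mem_inter_iff, mem_preimage, Fin.forall_fin_succ,
    Fin.val_zero, iterate_zero, id, Fin.val_succ, iterate_succ_apply]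
  constructor
  · rintro ⟨hx, h0, hs⟩
    rw [← hc x h0]
    exact ⟨h0, hT.bijOn.mapsTo hx, hs⟩
  · rintro ⟨h0, -, hs⟩
    rw [← hc x h0] at hs
    exact ⟨hT.Ico_sep_subset _ h0, h0, hs⟩

theorem exists_ietCylinder_eq_Ico (hT : IsIET k lam sep T) :
    ∀ {n : ℕ} (w : Fin n → Fin k), ∃ a b, ietCylinder lam sep T w = Ico a b ∧
      (a < b → a = 0 ∨ ∃ j < n, ∃ i : Fin (k - 1), T^[j] a = interiorSep sep i)
  | 0, w => ⟨0, lam, by ext; simp [ietCylinder], fun _ => Or.inl rfl⟩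
  | n + 1, w => by
    obtain ⟨a', b', hC', hcut'⟩ := hT.exists_ietCylinder_eq_Ico (Fin.tail w)
    obtain ⟨c, hc⟩ := hT.translation (w 0)
    have hC : ietCylinder lam sep T w =
        Ico (sep (w 0).castSucc ⊔ (a' - c)) (sep (w 0).succ ⊓ (b' - c)) := by
      rw [hT.ietCylinder_succ w hc, hC', preimage_add_const_Ico, Ico_inter_Ico]
    refine ⟨_, _, hC, fun hab => ?_⟩
    set a := sep (w 0).castSucc ⊔ (a' - c)
    have ha : a ∈ ietCylinder lam sep T w := hC ▸ left_mem_Ico.2 hab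
    rw [hT.ietCylinder_succ w hc, hC'] at ha
    obtain ⟨ha0, ha'⟩ := ha
    by_cases hsep : a = sep (w 0).castSucc
    · by_cases hw : (w 0 : ℕ) = 0
      · left
        rw [hsep, ← hT.sep_zero]
        exact congrArg sep (Fin.ext hw)
      · refine Or.inr ⟨0, n.succ_pos, ⟨w 0 - 1, by omega⟩, ?_⟩
        rw [hsep, interiorSep]
        exact congrArg sep (Fin.ext (by simp only [Fin.val_castSucc]; omega))
    have ha_eq : a = a' - c := (max_choice _ _).resolve_left hsep
    rcases hcut' (ha'.1.trans_lt ha'.2) with h0 | ⟨j, hj, i, hji⟩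
    · -- then `a = -c`, while `T (sep (w 0)) = sep (w 0) + c ≥ 0`, so `a ≤ sep (w 0)`
      have hsep_mem : sep (w 0).castSucc ∈ Ico (sep (w 0).castSucc) (sep (w 0).succ) :=
        left_mem_Ico.2 (hT.sep_mono Fin.castSucc_lt_succ)
      have hnonneg := (hT.bijOn.mapsTo (hT.Ico_sep_subset _ hsep_mem)).1
      rw [hc _ hsep_mem] at hnonneg
      exact absurd (le_antisymm (by linarith) ha0.1) hsep
    · refine Or.inr ⟨j + 1, by omega, i, ?_⟩
      rw [iterate_succ_apply, hc a ha0, ha_eq, sub_add_cancel, hji]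

theorem mem_range_cutPoint (hT : IsIET k lam sep T) {a : ℝ} (ha : a ∈ Ico 0 lam)
    (hcut : a = 0 ∨ ∃ j < n, ∃ i : Fin (k - 1), T^[j] a = interiorSep sep i) :
    a ∈ range (cutPoint lam sep T : Option (Fin n × Fin (k - 1)) → ℝ) := by
  rcases hcut with rfl | ⟨j, hj, i, hji⟩
  · exact ⟨none, rfl⟩
  · refine ⟨some (⟨j, hj⟩, i), ?_⟩
    simp only [cutPoint, ← hji, (hT.bijOn.iterate j).injOn.leftInvOn_invFunOn ha]

end IsIET

theorem iet_complexity_le_general (k : ℕ) (lam : ℝ) (sep : Fin (k + 1) → ℝ) (T : ℝ → ℝ)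
    (hT : IsIET k lam sep T) (n : ℕ) :
    ietComplexity k lam sep T n ≤ (k - 1) * n + 1 := by
  let Words := {w : Fin n → Fin k // (ietCylinder lam sep T w).Nonempty}
  choose a b hC hcut using fun w : Fin n → Fin k => hT.exists_ietCylinder_eq_Ico w
  have hab (w : Words) : a w < b w := nonempty_Ico.1 (hC w ▸ w.2)
  have ha (w : Words) : a w ∈ ietCylinder lam sep T w.1 := (hC w).symm ▸ left_mem_Ico.2 (hab w)
  choose code hcode using fun w : Words => hT.mem_range_cutPoint (ha w).1 (hcut w (hab w))
  have hcode_inj : Injective code := fun w w' h =>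
    Subtype.ext <| eq_of_mem_ietCylinder hT.sep_mono (ha w) <| by
      rw [← hcode w, h, hcode w']
      exact ha w'
  calc ietComplexity k lam sep T n = Nat.card Words := rfl
    _ ≤ Nat.card (Option (Fin n × Fin (k - 1))) :=
      Nat.card_le_card_of_injective code hcode_inj
    _ = (k - 1) * n + 1 := by
      simp [Nat.card_eq_fintype_card, mul_comm]

/-- The natural coding of a minimal `k`-IET has complexity `P(n) ≤ (k-1)n + 1`. -/
theorem iet_complexity_le (k : ℕ) (lam : ℝ) (sep : Fin (k + 1) → ℝ) (T : ℝ → ℝ)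
    (hT : IsIET k lam sep T) (hmin : IETMinimal lam T) (n : ℕ) (hn : 1 ≤ n) :
    ietComplexity k lam sep T n ≤ (k - 1) * n + 1 :=
  iet_complexity_le_general k lam sep T hT n
end

section
/- Let (X, σ) be a subshift and suppose x₁, …, x_d ∈ X are generic points for pairwise distinct measures μ₁, …, μ_d. Then there exist words w_{(j₁,j₂)} in the language of X for each pair 1 ≤ j₁ < j₂ ≤ d with μ_{j₁}([w_{(j₁,j₂)}]) ≠ μ_{j₂}([w_{(j₁,j₂)}]), and for all sufficiently large ℓ and all admissible starting positions, any word of length ℓ occurring in x_{i₁} (at position ≥ M) differs from any word of length ℓ occurring in x_{i₂} (at position ≥ M and ≤ a linear bound) whenever i₁ ≠ i₂; that is, the sets W_i of such length-ℓ subwords of x_i are pairwise disjoint. -/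
open MeasureTheory Filter
open scoped ENNReal

/-- The left shift on bi-infinite sequences. -/
def shift {A : Type*} (x : ℤ → A) : ℤ → A := fun n => x (n + 1)

/-- A subshift: a closed, shift-invariant subset of `A^ℤ`. -/
def IsSubshift {A : Type*} [TopologicalSpace A] (X : Set (ℤ → A)) : Prop :=
  IsClosed X ∧ shift '' X = X

/-- The word complexity `P_X(n)`: the number of words of length `n` occurring in `X`. -/
noncomputable def complexity {A : Type*} (X : Set (ℤ → A)) (n : ℕ) : ℕ :=
  Nat.card {w : Fin n → A // ∃ x ∈ X, ∃ m : ℤ, ∀ t : Fin n, x (m + (t : ℕ)) = w t}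

/-- `x` is a generic point for the measure `μ`. -/
def IsGenericPt {A : Type*} [TopologicalSpace A] [MeasurableSpace A]
    (μ : Measure (ℤ → A)) (x : ℤ → A) : Prop :=
  ∀ f : (ℤ → A) → ℝ, Continuous f →
    Tendsto (fun N : ℕ => (∑ n ∈ Finset.range N, f (shift^[n] x)) / (N : ℝ))
      atTop (nhds (∫ y, f y ∂μ))

/-- A generic measure on the subshift `X`: a Borel probability measure carried by `X`
possessing a generic point in `X`. -/
def GenericMeasureOn {A : Type*} [TopologicalSpace A] [MeasurableSpace A]
    (X : Set (ℤ → A)) (μ : Measure (ℤ → A)) : Prop :=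
  IsProbabilityMeasure μ ∧ μ X = 1 ∧ ∃ x ∈ X, IsGenericPt μ x

/-- The cylinder set of a word `w` (at position `0`). -/
def cyl {A : Type*} {r : ℕ} (w : Fin r → A) : Set (ℤ → A) :=
  {y | ∀ t : Fin r, y ((t : ℕ) : ℤ) = w t}

/-- `w` occurs in the subshift `X`. -/
def InLanguage {A : Type*} (X : Set (ℤ → A)) {r : ℕ} (w : Fin r → A) : Prop :=
  ∃ x ∈ X, ∃ m : ℤ, ∀ t : Fin r, x (m + (t : ℕ)) = w t

/-!
A generic measure is shift-invariant, since the Birkhoff averages of `f ∘ shift` and `f`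
differ by `O(1/N)`. Two shift-invariant measures agreeing on all cylinders at position `0`
agree on every cylinder, hence are equal; so distinct generic measures `μ ≠ ν` are separated
by a word `w`, which occurs in the generic point of whichever measure charges `[w]`.
The frequency of `w` in a window of length `ℓ` starting before `κℓ` tends to `μ[w]`
uniformly in the starting point, whereas two equal windows contain the same number of
occurrences of `w`, up to the `|w|` occurrences overlapping their right end. So for long
windows the two counts, close to `μ[w] ℓ` and `ν[w] ℓ`, cannot match.
-/

open Finset Topology

section CesaroWindows

theorem exists_abs_sub_mul_le_of_tendsto_div {u : ℕ → ℝ} {α η : ℝ}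
    (h : Tendsto (fun K : ℕ => u K / K) atTop (𝓝 α)) (hη : 0 < η) :
    ∃ C : ℝ, ∀ K : ℕ, |u K - α * K| ≤ η * K + C := by
  obtain ⟨K₀, hK₀⟩ := Metric.tendsto_atTop.1 h η hη
  refine ⟨∑ K ∈ range (K₀ + 1), |u K - α * K|, fun K => ?_⟩
  have hηK : 0 ≤ η * K := by positivity
  rcases le_or_gt K K₀ with hK | hK
  · have := single_le_sum (f := fun K : ℕ => |u K - α * K|) (fun _ _ => abs_nonneg _)
      (mem_range.2 (Nat.lt_succ_of_le hK))
    linarith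
  · have hKpos : (0 : ℝ) < K := by exact_mod_cast (Nat.zero_le K₀).trans_lt hK
    have hdist : |u K / K - α| * K ≤ η * K :=
      mul_le_mul_of_nonneg_right (hK₀ K hK.le).le hKpos.le
    have hsum : 0 ≤ ∑ K ∈ range (K₀ + 1), |u K - α * K| := sum_nonneg fun _ _ => abs_nonneg _
    have hrw : u K - α * K = (u K / K - α) * K := by field_simp
    rw [hrw, abs_mul, abs_of_pos hKpos]
    linarith

theorem exists_abs_window_sum_sub_le {a : ℕ → ℝ} {α η : ℝ}
    (h : Tendsto (fun N : ℕ => (∑ n ∈ range N, a n) / N) atTop (𝓝 α)) (hη : 0 < η) (κ : ℕ) :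
    ∃ C : ℝ, ∀ L ℓ : ℕ, L ≤ κ * ℓ → |∑ n ∈ range ℓ, a (L + n) - α * ℓ| ≤ η * ℓ + C := by
  have hκ : (0 : ℝ) < 2 * κ + 1 := by positivity
  obtain ⟨C, hC⟩ := exists_abs_sub_mul_le_of_tendsto_div h (div_pos hη hκ)
  refine ⟨2 * C, fun L ℓ hL => ?_⟩
  have hsplit : ∑ n ∈ range ℓ, a (L + n) - α * ℓ
      = (∑ n ∈ range (L + ℓ), a n - α * ↑(L + ℓ)) - (∑ n ∈ range L, a n - α * L) := by
    rw [sum_range_add]; push_cast; ring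
  have hLℓ : η / (2 * κ + 1) * (2 * L + ℓ) ≤ η * ℓ := by
    have : (2 * L + ℓ : ℝ) ≤ (2 * κ + 1) * ℓ := by
      have : (L : ℝ) ≤ κ * ℓ := by exact_mod_cast hL
      linarith
    calc η / (2 * κ + 1) * (2 * L + ℓ) ≤ η / (2 * κ + 1) * ((2 * κ + 1) * ℓ) := by gcongr
      _ = η * ℓ := by field_simp
  have h₁ := hC (L + ℓ)
  have h₂ := hC L
  push_cast at h₁
  rw [hsplit]
  calc _ ≤ |∑ n ∈ range (L + ℓ), a n - α * ↑(L + ℓ)| + |∑ n ∈ range L, a n - α * L| :=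
        abs_sub _ _
    _ ≤ η / (2 * κ + 1) * (2 * L + ℓ) + 2 * C := by push_cast; linarith
    _ ≤ η * ℓ + 2 * C := by linarith

theorem abs_sum_range_sub_sum_range_le {u v : ℕ → ℝ} (hu : ∀ n, u n ∈ Set.Icc 0 1)
    (hv : ∀ n, v n ∈ Set.Icc 0 1) {ℓ r : ℕ} (huv : ∀ n, n + r ≤ ℓ → u n = v n) :
    |∑ n ∈ range ℓ, u n - ∑ n ∈ range ℓ, v n| ≤ r := by
  have hhead : ∑ n ∈ range (ℓ - r), (u n - v n) = 0 :=
    sum_eq_zero fun n hn => sub_eq_zero.2 (huv n (by rw [mem_range] at hn; omega))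
  rw [← sum_sub_distrib, ← sum_range_add_sum_Ico _ (Nat.sub_le ℓ r), hhead, zero_add]
  calc |∑ n ∈ Ico (ℓ - r) ℓ, (u n - v n)| ≤ ∑ n ∈ Ico (ℓ - r) ℓ, |u n - v n| :=
        abs_sum_le_sum_abs _ _
    _ ≤ ∑ n ∈ Ico (ℓ - r) ℓ, (1 : ℝ) := sum_le_sum fun n _ => by
        obtain ⟨hu₀, hu₁⟩ := hu n
        obtain ⟨hv₀, hv₁⟩ := hv n
        exact abs_sub_le_iff.2 ⟨by linarith, by linarith⟩
    _ ≤ r := by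
        rw [sum_const, Nat.card_Ico, nsmul_one]
        exact_mod_cast (by omega : ℓ - (ℓ - r) ≤ r)

theorem eventually_exists_ne_of_tendsto_avg {a b : ℕ → ℝ} {α β : ℝ}
    (ha : ∀ n, a n ∈ Set.Icc 0 1) (hb : ∀ n, b n ∈ Set.Icc 0 1)
    (hα : Tendsto (fun N : ℕ => (∑ n ∈ range N, a n) / N) atTop (𝓝 α))
    (hβ : Tendsto (fun N : ℕ => (∑ n ∈ range N, b n) / N) atTop (𝓝 β))
    (hαβ : α ≠ β) (κ r : ℕ) :
    ∀ᶠ ℓ in atTop, ∀ L₁ L₂ : ℕ, L₁ ≤ κ * ℓ → L₂ ≤ κ * ℓ →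
      ∃ n, n + r ≤ ℓ ∧ a (L₁ + n) ≠ b (L₂ + n) := by
  have hε : 0 < |α - β| := abs_pos.2 (sub_ne_zero.2 hαβ)
  obtain ⟨Ca, hCa⟩ := exists_abs_window_sum_sub_le hα (by positivity : 0 < |α - β| / 4) κ
  obtain ⟨Cb, hCb⟩ := exists_abs_window_sum_sub_le hβ (by positivity : 0 < |α - β| / 4) κ
  filter_upwards [tendsto_natCast_atTop_atTop.eventually_gt_atTop (2 * (Ca + Cb + r) / |α - β|)]
    with ℓ hℓ L₁ L₂ h₁ h₂
  by_contra! hwin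
  have hD := abs_sum_range_sub_sum_range_le (fun n => ha (L₁ + n)) (fun n => hb (L₂ + n)) hwin
  have hℓ' : 2 * (Ca + Cb + r) < |α - β| * ℓ := by rwa [div_lt_iff₀' hε] at hℓ
  have hgap : |α * ℓ - β * ℓ| ≤ |α - β| / 4 * ℓ + Ca + r + (|α - β| / 4 * ℓ + Cb) := by
    have h₁ := hCa L₁ ℓ h₁
    have h₂ := hCb L₂ ℓ h₂
    rw [abs_le] at h₁ h₂ hD ⊢
    constructor <;> linarith
  rw [← sub_mul, abs_mul, Nat.abs_cast] at hgap
  linarith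

end CesaroWindows

section Shift

variable {A : Type*}

theorem shift_iterate_apply (y : ℤ → A) (n : ℕ) (m : ℤ) : shift^[n] y m = y (m + n) := by
  induction n generalizing y with
  | zero => simp
  | succ n ih =>
    rw [Function.iterate_succ_apply, ih]
    simp only [shift, Nat.cast_succ]
    ring_nf

theorem shift_iterate_mem_cyl_iff {r : ℕ} (w : Fin r → A) (y : ℤ → A) (m : ℕ) :
    shift^[m] y ∈ cyl w ↔ ∀ t : Fin r, y (m + t) = w t := by
  simp only [cyl, Set.mem_ofPred_eq, shift_iterate_apply, add_comm]

theorem exists_ne_of_indicator_cyl_ne {r : ℕ} {w : Fin r → A} {y z : ℤ → A} {m₁ m₂ : ℕ}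
    (h : (cyl w).indicator (1 : (ℤ → A) → ℝ) (shift^[m₁] y) ≠
      (cyl w).indicator 1 (shift^[m₂] z)) :
    ∃ t : Fin r, y (m₁ + t) ≠ z (m₂ + t) := by
  by_contra! hyz
  exact h (Set.indicator_eq_indicator (by simp only [shift_iterate_mem_cyl_iff, hyz]) rfl)

theorem indicator_one_mem_Icc {X : Type*} (U : Set X) (y : X) :
    U.indicator (1 : X → ℝ) y ∈ Set.Icc 0 1 := by
  by_cases hy : y ∈ U <;> simp [hy]

variable [TopologicalSpace A]

theorem continuous_shift : Continuous (shift : (ℤ → A) → ℤ → A) :=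
  continuous_pi fun n => continuous_apply (n + 1)

variable [DiscreteTopology A]

theorem isClopen_cyl {r : ℕ} (w : Fin r → A) : IsClopen (cyl w) := by
  simp only [cyl, Set.ofPred_forall]
  exact isClopen_iInter_of_finite fun t =>
    (isClopen_discrete {w t}).preimage (continuous_apply _)

theorem isClopen_cylinder (I : Finset ℤ) (S : Set (I → A)) :
    IsClopen (cylinder (α := fun _ : ℤ => A) I S) :=
  (isClopen_discrete S).preimage (continuous_pi fun _ => continuous_apply _)

end Shift

section Generic

variable {A : Type*} [TopologicalSpace A] [MeasurableSpace A] {μ : Measure (ℤ → A)}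
  {x : ℤ → A}

theorem IsGenericPt.integral_comp_shift (hx : IsGenericPt μ x) {f : (ℤ → A) → ℝ}
    (hf : Continuous f) {C : ℝ} (hC : ∀ y, |f y| ≤ C) :
    ∫ y, f (shift y) ∂μ = ∫ y, f y ∂μ := by
  set g : ℕ → ℝ := fun n => f (shift^[n] x)
  have hg : ∀ n, |g n| ≤ C := fun n => hC _
  have hboundary : Tendsto (fun N : ℕ => (g N - g 0) / N) atTop (𝓝 0) := by
    refine squeeze_zero_norm (fun N => ?_) (tendsto_const_div_atTop_nhds_zero_nat (2 * C))
    rw [norm_div, Real.norm_natCast]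
    gcongr
    calc ‖g N - g 0‖ ≤ |g N| + |g 0| := abs_sub _ _
      _ ≤ 2 * C := by linarith [hg N, hg 0]
  refine tendsto_nhds_unique (hx _ (hf.comp continuous_shift)) ?_
  simpa using ((hx f hf).add hboundary).congr fun N => by
    rw [← add_div, ← sum_range_sub, ← sum_add_distrib]
    simp [g, Function.iterate_succ_apply']

variable [OpensMeasurableSpace (ℤ → A)]

theorem IsGenericPt.tendsto_avg_indicator (hx : IsGenericPt μ x) {U : Set (ℤ → A)}
    (hU : IsClopen U) :
    Tendsto (fun N : ℕ => (∑ n ∈ range N, U.indicator (1 : (ℤ → A) → ℝ) (shift^[n] x)) / N)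
      atTop (𝓝 (μ.real U)) := by
  rw [← integral_indicator_one hU.isOpen.measurableSet]
  exact hx _ (hU.continuous_indicator continuous_one)

variable [IsFiniteMeasure μ]

theorem IsGenericPt.exists_iterate_mem (hx : IsGenericPt μ x) {U : Set (ℤ → A)}
    (hU : IsClopen U) (hμU : μ U ≠ 0) : ∃ n, shift^[n] x ∈ U := by
  by_contra! hU'
  refine hμU ((measureReal_eq_zero_iff).1 (tendsto_nhds_unique (hx.tendsto_avg_indicator hU) ?_))
  simp [Set.indicator_of_notMem (hU' _)]

theorem IsGenericPt.inLanguage [DiscreteTopology A] (hx : IsGenericPt μ x)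
    {X : Set (ℤ → A)} (hxX : x ∈ X) {r : ℕ} {w : Fin r → A} (hw : μ (cyl w) ≠ 0) :
    InLanguage X w := by
  obtain ⟨n, hn⟩ := hx.exists_iterate_mem (isClopen_cyl w) hw
  exact ⟨x, hxX, n, (shift_iterate_mem_cyl_iff w x n).1 hn⟩

theorem IsGenericPt.measure_preimage_shift (hx : IsGenericPt μ x) {U : Set (ℤ → A)}
    (hU : IsClopen U) : μ (shift ⁻¹' U) = μ U := by
  have hU' : MeasurableSet (shift ⁻¹' U) :=
    (hU.preimage continuous_shift).isOpen.measurableSet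
  have h := hx.integral_comp_shift (hU.continuous_indicator continuous_one) (C := 1)
    fun y => by obtain ⟨h₀, h₁⟩ := indicator_one_mem_Icc U y; exact abs_le.2 ⟨by linarith, h₁⟩
  rw [← measureReal_eq_measureReal_iff, ← integral_indicator_one hU',
    ← integral_indicator_one hU.isOpen.measurableSet, ← h]
  rfl

theorem IsGenericPt.measurePreserving_shift [DiscreteTopology A] (hx : IsGenericPt μ x) :
    MeasurePreserving shift μ μ := by
  have hshift : Measurable (shift : (ℤ → A) → ℤ → A) :=
    measurable_pi_lambda _ fun n => measurable_pi_apply (n + 1)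
  refine ⟨hshift, ext_of_generate_finite _ generateFrom_measurableCylinders.symm
    isPiSystem_measurableCylinders (fun s hs => ?_) ?_⟩
  · obtain ⟨I, S, -, rfl⟩ := (mem_measurableCylinders s).1 hs
    rw [Measure.map_apply hshift (isClopen_cylinder I S).isOpen.measurableSet]
    exact hx.measure_preimage_shift (isClopen_cylinder I S)
  · rw [Measure.map_apply hshift MeasurableSet.univ, Set.preimage_univ]

end Generic

section Cylinders

variable {A : Type*} [Finite A] [TopologicalSpace A] [DiscreteTopology A] [MeasurableSpace A]
  [OpensMeasurableSpace (ℤ → A)] {μ ν : Measure (ℤ → A)}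

theorem measure_eq_of_forall_measure_cyl_eq {r : ℕ}
    (h : ∀ w : Fin r → A, μ (cyl w) = ν (cyl w)) {s : Set (ℤ → A)}
    (hs : ∀ y z : ℤ → A, (∀ t : Fin r, y t = z t) → y ∈ s → z ∈ s) : μ s = ν s := by
  let word : (ℤ → A) → Fin r → A := fun y t => y t
  have hcyl : ∀ w, word ⁻¹' {w} = cyl w := fun w => by
    ext y
    simp [word, cyl, funext_iff]
  have hmeas : ∀ w, MeasurableSet (word ⁻¹' {w}) := fun w =>
    hcyl w ▸ (isClopen_cyl w).isOpen.measurableSet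
  have hsat : s = word ⁻¹' ↑(Set.toFinite (word '' s)).toFinset := by
    ext y
    simp only [Set.mem_preimage, Set.Finite.coe_toFinset, Set.mem_image]
    exact ⟨fun hy => ⟨y, hy, rfl⟩, fun ⟨z, hz, hzy⟩ => hs z y (congrFun hzy) hz⟩
  rw [hsat, ← sum_measure_preimage_singleton _ fun w _ => hmeas w,
    ← sum_measure_preimage_singleton _ fun w _ => hmeas w]
  simp only [hcyl, h]

/-- A power of the shift moves every measurable cylinder to a set depending only on the
coordinates in some `[0, r)`. -/
theorem ext_of_measurePreserving_shift_of_measure_cyl_eq [IsFiniteMeasure μ]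
    (hμ : MeasurePreserving shift μ μ) (hν : MeasurePreserving shift ν ν)
    (h : ∀ (r : ℕ) (w : Fin r → A), μ (cyl w) = ν (cyl w)) : μ = ν := by
  refine ext_of_generate_finite _ generateFrom_measurableCylinders.symm
    isPiSystem_measurableCylinders (fun s hs => ?_) (by simpa [cyl] using h 0 finZeroElim)
  obtain ⟨I, S, hS, rfl⟩ := (mem_measurableCylinders s).1 hs
  obtain ⟨k, hk⟩ : ∃ k : ℕ, ∀ i ∈ I, i.natAbs < k :=
    ⟨I.sup Int.natAbs + 1, fun i hi => Nat.lt_succ_of_le (le_sup hi)⟩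
  have hmeas := MeasurableSet.cylinder (α := fun _ : ℤ => A) I hS
  rw [← (hμ.iterate k).measure_preimage hmeas.nullMeasurableSet,
    ← (hν.iterate k).measure_preimage hmeas.nullMeasurableSet]
  refine measure_eq_of_forall_measure_cyl_eq (h (2 * k)) fun y z hyz hy => ?_
  rw [Set.mem_preimage, mem_cylinder] at hy ⊢
  convert hy using 1
  funext i
  have hi := hk i i.2
  have hik : 0 ≤ (i : ℤ) + k := by omega
  simpa [Finset.restrict, shift_iterate_apply, Int.toNat_of_nonneg hik] using
    (hyz ⟨((i : ℤ) + k).toNat, by omega⟩).symm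

variable [IsFiniteMeasure μ] [IsFiniteMeasure ν] {x y : ℤ → A}

theorem IsGenericPt.exists_measure_cyl_ne (hx : IsGenericPt μ x) (hy : IsGenericPt ν y)
    (hne : μ ≠ ν) : ∃ (r : ℕ) (w : Fin r → A), μ (cyl w) ≠ ν (cyl w) := by
  by_contra! h
  exact hne (ext_of_measurePreserving_shift_of_measure_cyl_eq hx.measurePreserving_shift
    hy.measurePreserving_shift h)

theorem IsGenericPt.eventually_exists_window_ne (hx : IsGenericPt μ x) (hy : IsGenericPt ν y)
    (hne : μ ≠ ν) (κ : ℕ) :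
    ∀ᶠ ℓ in atTop, ∀ L₁ L₂ : ℕ, L₁ ≤ κ * ℓ → L₂ ≤ κ * ℓ →
      ∃ t < ℓ, x ((L₁ : ℤ) + t) ≠ y ((L₂ : ℤ) + t) := by
  obtain ⟨r, w, hw⟩ := hx.exists_measure_cyl_ne hy hne
  filter_upwards [eventually_exists_ne_of_tendsto_avg (fun _ => indicator_one_mem_Icc _ _)
    (fun _ => indicator_one_mem_Icc _ _) (hx.tendsto_avg_indicator (isClopen_cyl w))
    (hy.tendsto_avg_indicator (isClopen_cyl w)) ((measureReal_eq_measureReal_iff).not.2 hw) κ r]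
    with ℓ hℓ L₁ L₂ h₁ h₂
  obtain ⟨n, hnℓ, hn⟩ := hℓ L₁ L₂ h₁ h₂
  obtain ⟨t, ht⟩ := exists_ne_of_indicator_cyl_ne hn
  exact ⟨n + t, by omega, by simpa [add_assoc] using ht⟩

end Cylinders

theorem disjoint_window_sets_general
    {A : Type*} [Fintype A] [TopologicalSpace A] [DiscreteTopology A]
    [MeasurableSpace A] [BorelSpace A]
    (X : Set (ℤ → A)) (d : ℕ)
    (x : Fin d → (ℤ → A)) (μ : Fin d → Measure (ℤ → A))
    (hxX : ∀ i, x i ∈ X) (hprob : ∀ i, IsProbabilityMeasure (μ i))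
    (hgen : ∀ i, IsGenericPt (μ i) (x i))
    (hinj : Function.Injective μ) :
    (∀ i j : Fin d, i ≠ j →
      ∃ (r : ℕ) (w : Fin r → A), InLanguage X w ∧ μ i (cyl w) ≠ μ j (cyl w)) ∧
    ∃ (M : ℕ) (δ : ℝ), 0 < δ ∧ δ < 1 ∧ ∃ N₀ : ℕ, ∀ N : ℕ, N₀ ≤ N →
      ∀ i j : Fin d, i ≠ j → ∀ L₁ L₂ : ℕ,
        M ≤ L₁ → (L₁ : ℝ) ≤ (2 - δ) * N → M ≤ L₂ → (L₂ : ℝ) ≤ (2 - δ) * N →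
          ∃ t : ℕ, t < Nat.floor (δ * N) ∧ x i ((L₁ : ℤ) + t) ≠ x j ((L₂ : ℤ) + t) := by
  refine ⟨fun i j hij => ?_, 0, 1 / 2, by norm_num, by norm_num, ?_⟩
  · obtain ⟨r, w, hw⟩ := (hgen i).exists_measure_cyl_ne (hgen j) (hinj.ne hij)
    refine ⟨r, w, ?_, hw⟩
    by_cases hi : μ i (cyl w) = 0
    · exact (hgen j).inLanguage (hxX j) (by rwa [hi, ne_comm] at hw)
    · exact (hgen i).inLanguage (hxX i) hi
  · have hwin : ∀ᶠ ℓ in atTop, ∀ i j : Fin d, i ≠ j → ∀ L₁ L₂ : ℕ, L₁ ≤ 6 * ℓ → L₂ ≤ 6 * ℓ →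
        ∃ t < ℓ, x i ((L₁ : ℤ) + t) ≠ x j ((L₂ : ℤ) + t) :=
      eventually_all.2 fun i => eventually_all.2 fun j => eventually_imp_distrib_left.2
        fun hij => (hgen i).eventually_exists_window_ne (hgen j) (hinj.ne hij) 6
    -- `L ≤ 3N/2 ≤ 6 ⌊N/2⌋` as soon as `N ≥ 4`
    obtain ⟨N₀, hN₀⟩ :=
      eventually_atTop.1 ((Nat.tendsto_div_const_atTop two_ne_zero).eventually hwin)
    refine ⟨max N₀ 4, fun N hN i j hij L₁ L₂ _ hL₁ _ hL₂ => ?_⟩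
    have hfloor : ⌊(1 / 2 : ℝ) * N⌋₊ = N / 2 := by
      rw [one_div_mul_eq_div]
      exact_mod_cast Nat.floor_div_eq_div N 2
    have hL₁' : 2 * L₁ ≤ 3 * N := by exact_mod_cast (by linarith : (2 * L₁ : ℝ) ≤ 3 * N)
    have hL₂' : 2 * L₂ ≤ 3 * N := by exact_mod_cast (by linarith : (2 * L₂ : ℝ) ≤ 3 * N)
    rw [hfloor]
    exact hN₀ N (le_of_max_le_left hN) i j hij L₁ L₂ (by omega) (by omega)

/-- Given generic points `x i` for pairwise distinct measures `μ i`, there are words on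
which the measures pairwise disagree, and there are constants `δ ∈ (0,1)` and `M` such
that for all sufficiently large `N`, the windows of length `⌊δN⌋` of `x i` starting at
positions in `[M, ⌊(2-δ)N⌋]` are pairwise disjoint among distinct indices `i`. -/
theorem disjoint_window_sets
    {A : Type*} [Fintype A] [TopologicalSpace A] [DiscreteTopology A]
    [MeasurableSpace A] [BorelSpace A]
    (X : Set (ℤ → A)) (hX : IsSubshift X) (d : ℕ) (hd : 1 ≤ d)
    (x : Fin d → (ℤ → A)) (μ : Fin d → Measure (ℤ → A))
    (hxX : ∀ i, x i ∈ X) (hprob : ∀ i, IsProbabilityMeasure (μ i))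
    (hgen : ∀ i, IsGenericPt (μ i) (x i))
    (hinj : Function.Injective μ) :
    (∀ i j : Fin d, i ≠ j →
      ∃ (r : ℕ) (w : Fin r → A), InLanguage X w ∧ μ i (cyl w) ≠ μ j (cyl w)) ∧
    ∃ (M : ℕ) (δ : ℝ), 0 < δ ∧ δ < 1 ∧ ∃ N₀ : ℕ, ∀ N : ℕ, N₀ ≤ N →
      ∀ i j : Fin d, i ≠ j → ∀ L₁ L₂ : ℕ,
        M ≤ L₁ → (L₁ : ℝ) ≤ (2 - δ) * N → M ≤ L₂ → (L₂ : ℝ) ≤ (2 - δ) * N →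
          ∃ t : ℕ, t < Nat.floor (δ * N) ∧ x i ((L₁ : ℤ) + t) ≠ x j ((L₂ : ℤ) + t) :=
  disjoint_window_sets_general X d x μ hxX hprob hgen hinj
end

section
/- Let x ∈ A^ℕ be not eventually periodic and let p ≥ 1. If the word w_x(N', m) is periodic of period p but w_x(N'+1, m) is not (where N' is chosen maximal with this property for the given starting position m), then for any K := m + N' − N − p and any K ≤ i < j < K + p, the words w_x(N, i) and w_x(N, j) of length N ≥ p are distinct. -/
/-- The segment of `x` of length `len` starting at `m` is periodic of period `p`. -/
def PeriodicSeg {A : Type*} (x : ℕ → A) (m len p : ℕ) : Prop :=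
  ∀ t : ℕ, t + p < len → x (m + t + p) = x (m + t)

/-- Within one period-window of a maximal periodic stretch of minimal period `p`, all
length-`N` windows (`N ≥ p`) are pairwise distinct: if `w_x(N', m)` is periodic of
minimal period `p` but `w_x(N'+1, m)` is not, then for `K = m + N' - N - p` and
`K ≤ i < j < K + p` the words `w_x(N, i)` and `w_x(N, j)` differ. -/
theorem distinct_windows_in_maximal_periodic_stretch
    {A : Type*} [Fintype A] (x : ℕ → A) (hx : ¬ EventuallyPeriodicNat x)
    (m N N' p : ℕ) (hp : 1 ≤ p) (hpN : p ≤ N) (hNN' : N + p ≤ N')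
    (hper : PeriodicSeg x m N' p)
    (hmin : ∀ q : ℕ, 1 ≤ q → q < p → ¬ PeriodicSeg x m N' q)
    (hmax : ¬ PeriodicSeg x m (N' + 1) p) :
    ∀ i j : ℕ, m + N' - N - p ≤ i → i < j → j < (m + N' - N - p) + p →
      ∃ t < N, x (i + t) ≠ x (j + t) := by
  intro i j hKi hij hjK
  by_contra hcon
  push_neg at hcon
  -- hcon : ∀ t < N, x (i + t) = x (j + t)
  have hq1 : 1 ≤ j - i := by omega
  have hqp : j - i < p := by omega
  set q := j - i with hq
  have hji : j = i + q := by omega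
  -- iterated period p
  have iter : ∀ k t, t + k * p < N' → x (m + (t + k * p)) = x (m + t) := by
    intro k
    induction k with
    | zero => intro t _; norm_num
    | succ k ih =>
      intro t ht
      have e : t + (k + 1) * p = (t + p) + k * p := by ring
      rw [e, ih (t + p) (e ▸ ht)]
      have hpk : p ≤ (k + 1) * p := Nat.le_mul_of_pos_left p k.succ_pos
      have htp : t + p < N' := by
        have : t + p ≤ t + (k + 1) * p := by linarith
        linarith
      have := hper t htp
      rw [← Nat.add_assoc]
      exact this
  have transfer : ∀ a b : ℕ, a ≤ b → a % p = b % p → b < N' →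
      x (m + a) = x (m + b) := by
    intro a b hab hmod hbN
    obtain ⟨k, hk⟩ : p ∣ (b - a) := (Nat.modEq_iff_dvd' hab).mp hmod
    rw [mul_comm] at hk
    have hb : b = a + k * p := by omega
    rw [hb]
    exact (iter k a (by omega)).symm
  have transfer' : ∀ a b : ℕ, a % p = b % p → a < N' → b < N' →
      x (m + a) = x (m + b) := by
    intro a b hmod haN hbN
    rcases le_total a b with h | h
    · exact transfer a b h hmod hbN
    · exact (transfer b a h hmod.symm haN).symm
  -- derive the smaller period q on the whole stretch
  apply hmin q hq1 hqp
  intro t ht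
  set a := i - m with ha
  have hia : i = m + a := by omega
  set s := (t + (p - 1) * a) % p with hs
  have hsp : s < p := Nat.mod_lt _ (by omega)
  -- (a + s) % p = t % p
  have hmod : (a + s) % p = t % p := by
    have h1 : (a + s) % p = (a + (t + (p - 1) * a)) % p := by
      rw [hs, Nat.add_mod_mod]
    have h2 : a + (t + (p - 1) * a) = t + p * a := by
      have hp' : p - 1 + 1 = p := by omega
      calc a + (t + (p - 1) * a) = t + ((p - 1) + 1) * a := by ring
        _ = t + p * a := by rw [hp']
    rw [h1, h2, Nat.add_mul_mod_self_left]
  -- bounds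
  have haN : a < N' - N := by omega
  have hasN' : a + s < N' := by omega
  have hasqN' : a + s + q < N' := by omega
  -- window equality at offset s
  have hwin : x (m + (a + s)) = x (m + (a + s + q)) := by
    have := hcon s (lt_of_lt_of_le hsp hpN)
    rw [hia, hji] at this
    have e1 : m + a + s = m + (a + s) := by omega
    have e2 : i + q + s = m + (a + s + q) := by omega
    rw [e1, e2] at this
    exact this
  have step1 : x (m + t) = x (m + (a + s)) :=
    transfer' t (a + s) hmod.symm (by omega) hasN'
  have step2 : x (m + (a + s + q)) = x (m + (t + q)) := by
    apply transfer'
    · exact Nat.ModEq.add_right q hmod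
    · exact hasqN'
    · omega
  have : x (m + t) = x (m + (t + q)) := by
    rw [step1, hwin, step2]
  rw [← Nat.add_assoc] at this
  exact this.symm
end
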